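/- The entropy-regularized causal optimal transport problem admits the minimax reformulation: inf over causal couplings π of {E^π[c] - εH(π)} equals sup over l in L(μ) of inf over all couplings π of {E^π[c+l] - εH(π)}. -/

import Mathlib

open scoped BigOperators

/-- Shannon entropy of a probability vector on a finite set. -/
noncomputable def shannonEntropy {α : Type*} [Fintype α] (p : α → ℝ) : ℝ :=
  -∑ a, p a * Real.log (p a)

/-- A coupling of `μ` and `ν`. -/
def IsCouplingOf {A B : Type*} [Fintype A] [Fintype B]
    (μ : A → ℝ) (ν : B → ℝ) (π : A × B → ℝ) : Prop :=
  (∀ p, 0 ≤ π p) ∧ (∀ a, ∑ b, π (a, b) = μ a) ∧ (∀ b, ∑ a, π (a, b) = ν b)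

/-- Expected cost `E^π[c]`. -/
noncomputable def expCost {A : Type*} [Fintype A] (π : A → ℝ) (c : A → ℝ) : ℝ :=
  ∑ a, π a * c a

/-- `f` depends only on the coordinates of the path up to (and including) time `t`. -/
def DepOn {Z : Type*} {T : ℕ} (t : ℕ) (f : (Fin T → Z) → ℝ) : Prop :=
  ∀ z z' : Fin T → Z, (∀ s : Fin T, (s : ℕ) ≤ t → z s = z' s) → f z = f z'

/-- Causality of a coupling on path spaces: for each `t` with `t + 1 < T`,
conditionally on `x_{≤t}`, the past `y_{≤t}` is independent of the whole path `x`. -/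
def CausalCoupling {X Y : Type*} {T : ℕ} [Fintype X] [Fintype Y] [DecidableEq X]
    (π : ((Fin T → X) × (Fin T → Y)) → ℝ) : Prop :=
  ∀ t : ℕ, t + 1 < T →
    ∀ f : (Fin T → Y) → ℝ, DepOn t f →
    ∀ g : (Fin T → X) → ℝ, ∀ a : Fin T → X,
      (∑ p : (Fin T → X) × (Fin T → Y),
          if ∀ s : Fin T, (s : ℕ) ≤ t → p.1 s = a s then π p * f p.2 * g p.1 else 0) *
        (∑ p : (Fin T → X) × (Fin T → Y),
          if ∀ s : Fin T, (s : ℕ) ≤ t → p.1 s = a s then π p else 0)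
      = (∑ p : (Fin T → X) × (Fin T → Y),
          if ∀ s : Fin T, (s : ℕ) ≤ t → p.1 s = a s then π p * f p.2 else 0) *
        (∑ p : (Fin T → X) × (Fin T → Y),
          if ∀ s : Fin T, (s : ℕ) ≤ t → p.1 s = a s then π p * g p.1 else 0)

/-- `M` is an adapted `μ`-martingale w.r.t. the canonical filtration:
`M t` depends only on coordinates up to time `t`, and
`E^μ[(M_{t+1} - M_t) φ] = 0` for every `φ` depending only on `x_{≤t}`. -/
def IsMuMartingale {X : Type*} {T : ℕ} [Fintype X]
    (μ : (Fin T → X) → ℝ) (M : ℕ → (Fin T → X) → ℝ) : Prop :=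
  (∀ t : ℕ, DepOn t (M t)) ∧
  ∀ t : ℕ, t + 1 < T → ∀ φ : (Fin T → X) → ℝ, DepOn t φ →
    ∑ x, μ x * φ x * (M (t + 1) x - M t x) = 0

/-- Membership in the set `L(μ)` of causality test functions. -/
def InLmu {X Y : Type*} {T : ℕ} [Fintype X] [Fintype Y]
    (μ : (Fin T → X) → ℝ) (l : ((Fin T → X) × (Fin T → Y)) → ℝ) : Prop :=
  ∃ (J : ℕ) (h : Fin J → ℕ → (Fin T → Y) → ℝ) (M : Fin J → ℕ → (Fin T → X) → ℝ),
    (∀ j t, DepOn t (h j t)) ∧ (∀ j, IsMuMartingale μ (M j)) ∧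
    l = fun p => ∑ j, ∑ t ∈ Finset.range (T - 1), h j t p.2 * (M j (t + 1) p.1 - M j t p.1)

/-!
A coupling `π` is causal iff `E^π[l] = 0` for every `l ∈ L(μ)`. Forward: on each cylinder
`{x_{≤t} = a_{≤t}}` the causality identity with `g = ΔM` reduces to `E^μ[1_a ΔM] = 0`. Converse:
pairing with the increments of the Doob martingale `E^μ[ψ | x_{≤t}]` telescopes to
`E^π[f(y) ψ(x)] = E^π[f(y) E^μ[ψ | x_{≤t}](x)]` for `f` depending on `y_{≤t}`, which is causality.
Hence the causal problem minimizes a continuous convex function over the compact convex set of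
couplings under the linear constraints `π ⊥ L(μ)`, and the minimax identity is Lagrangian strong
duality in finite dimension: for each `δ > 0`, Hahn–Banach separation yields a `δ`-optimal
multiplier in `L(μ)`.
-/

open Finset
open scoped Pointwise

theorem sum_ite_mul_eq_zero_of_sum_ite_eq_zero {α : Type*} [Fintype α] {w : α → ℝ}
    (hw : ∀ p, 0 ≤ w p) {P : α → Prop} [DecidablePred P]
    (h : (∑ p, if P p then w p else 0) = 0) (G : α → ℝ) :
    (∑ p, if P p then w p * G p else 0) = 0 := by
  have hzero := (sum_eq_zero_iff_of_nonneg fun p _ => by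
    split_ifs
    exacts [hw p, le_rfl]).1 h
  refine sum_eq_zero fun p hp => ?_
  have hp := hzero p hp
  split_ifs at hp ⊢
  · rw [hp, zero_mul]
  · rfl

section LagrangeDuality

variable {E G : Type*} [AddCommGroup E] [Module ℝ E] [TopologicalSpace E]
  [AddCommGroup G] [Module ℝ G] [TopologicalSpace G] [IsTopologicalAddGroup G]
  [ContinuousSMul ℝ G] [LocallyConvexSpace ℝ G] [T1Space G]

/-- The multiplier comes from separating the point `(0, m - δ)` from the closed convex set
`{(A π, r) | π ∈ K, F π ≤ r}`; feasibility forces the separating functional to be positive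
on the `ℝ`-axis. -/
theorem exists_lagrange_multiplier {K : Set E} (hK : IsCompact K) {F : E → ℝ}
    (hFc : ConvexOn ℝ K F) (hF : ContinuousOn F K) (A : E →ₗ[ℝ] G) (hA : ContinuousOn A K)
    {m : ℝ} (hm : ∀ π ∈ K, A π = 0 → m ≤ F π) (hne : ∃ π ∈ K, A π = 0) {δ : ℝ}
    (hδ : 0 < δ) : ∃ g : StrongDual ℝ G, ∀ π ∈ K, m - δ < F π + g (A π) := by
  set S : Set (G × ℝ) := {q | ∃ π ∈ K, ∃ r ≥ F π, (A π, r) = q}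
  have hSconv : Convex ℝ S := by
    rintro _ ⟨π₁, h₁, r₁, hr₁, rfl⟩ _ ⟨π₂, h₂, r₂, hr₂, rfl⟩ a b ha hb hab
    refine ⟨a • π₁ + b • π₂, hFc.1 h₁ h₂ ha hb hab, a * r₁ + b * r₂, ?_, by simp⟩
    calc F (a • π₁ + b • π₂) ≤ a • F π₁ + b • F π₂ := hFc.2 h₁ h₂ ha hb hab
      _ ≤ a * r₁ + b * r₂ := by simp only [smul_eq_mul]; gcongr
  have hSclosed : IsClosed S := by
    have hS : S = (fun π => (A π, F π)) '' K + {0} ×ˢ Set.Ici 0 := by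
      ext ⟨w, r⟩
      simp only [S, Set.mem_ofPred_eq, Set.mem_add, Set.mem_image, Set.mem_prod,
        Set.mem_singleton_iff, Set.mem_Ici]
      constructor
      · rintro ⟨π, hπ, r, hr, hq⟩
        exact ⟨_, ⟨π, hπ, rfl⟩, (0, r - F π), ⟨rfl, sub_nonneg.2 hr⟩, by simpa using hq⟩
      · rintro ⟨_, ⟨π, hπ, rfl⟩, ⟨_, s⟩, ⟨rfl, hs⟩, hsum⟩
        exact ⟨π, hπ, F π + s, by linarith, by simpa using hsum⟩
    rw [hS]
    exact (isClosed_singleton.prod isClosed_Ici).add_left_of_isCompact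
      (hK.image_of_continuousOn (hA.prodMk hF))
  have hnot : ((0 : G), m - δ) ∉ S := fun ⟨π, hπ, r, hr, hq⟩ => by
    simp only [Prod.mk.injEq] at hq
    linarith [hm π hπ hq.1]
  obtain ⟨φ, u, hφ₀, hφS⟩ := geometric_hahn_banach_point_closed hSconv hSclosed hnot
  set σ := φ (0, 1)
  have hsplit : ∀ w r, φ (w, r) = φ (w, 0) + r * σ := fun w r => by
    rw [← smul_eq_mul, ← map_smul, ← map_add]
    simp
  have hlower : ∀ π ∈ K, σ * (m - δ) < φ (A π, 0) + σ * F π := fun π hπ => by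
    have := hφS _ ⟨π, hπ, F π, le_rfl, rfl⟩
    rw [hsplit] at this hφ₀
    simp only [Prod.mk_zero_zero, map_zero, zero_add] at hφ₀
    linarith
  have hσ : 0 < σ := by
    obtain ⟨π₀, hπ₀, hA₀⟩ := hne
    have := hlower π₀ hπ₀
    rw [hA₀, Prod.mk_zero_zero, map_zero, zero_add] at this
    nlinarith [hm π₀ hπ₀ hA₀]
  refine ⟨σ⁻¹ • φ.comp (ContinuousLinearMap.inl ℝ G ℝ), fun π hπ => ?_⟩
  have := hlower π hπ
  simp only [smul_apply, ContinuousLinearMap.comp_apply,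
    ContinuousLinearMap.inl_apply, smul_eq_mul]
  rw [← sub_lt_iff_lt_add', lt_inv_mul_iff₀ hσ]
  linarith

variable {ι : Type*} [Fintype ι]

theorem exists_mem_forall_lt_add_dotProduct {K : Set (ι → ℝ)} (hK : IsCompact K)
    {F : (ι → ℝ) → ℝ} (hFc : ConvexOn ℝ K F) (hF : ContinuousOn F K)
    (W : Submodule ℝ (ι → ℝ)) {m : ℝ} (hm : ∀ π ∈ K, (∀ l ∈ W, π ⬝ᵥ l = 0) → m ≤ F π)
    (hne : ∃ π ∈ K, ∀ l ∈ W, π ⬝ᵥ l = 0) {δ : ℝ} (hδ : 0 < δ) :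
    ∃ l ∈ W, ∀ π ∈ K, m - δ < F π + π ⬝ᵥ l := by
  let b := Module.finBasis ℝ W
  let A : (ι → ℝ) →ₗ[ℝ] Fin (Module.finrank ℝ W) → ℝ :=
    LinearMap.pi fun i => (dotProductBilin ℝ ℝ).flip (b i : ι → ℝ)
  have hA : ∀ π, A π = 0 ↔ ∀ l ∈ W, π ⬝ᵥ l = 0 := fun π => by
    refine ⟨fun h l hl => ?_, fun h => funext fun i => h _ (b i).2⟩
    have : (dotProductBilin ℝ ℝ π).comp W.subtype = 0 := b.ext fun i => congr_fun h i
    exact LinearMap.congr_fun this ⟨l, hl⟩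
  obtain ⟨g, hg⟩ := exists_lagrange_multiplier hK hFc hF A
    (LinearMap.continuous_of_finiteDimensional A).continuousOn
    (fun π hπ h => hm π hπ ((hA π).1 h)) (by simpa only [hA] using hne) hδ
  refine ⟨∑ i, g (Pi.single i 1) • (b i : ι → ℝ),
    sum_mem fun i _ => W.smul_mem _ (b i).2, fun π hπ => ?_⟩
  convert hg π hπ using 2
  rw [← ContinuousLinearMap.coe_coe g, LinearMap.pi_apply_eq_sum_univ, dotProduct_sum]
  refine sum_congr rfl fun i _ => ?_
  have hsingle : (fun j => if i = j then (1 : ℝ) else 0) = Pi.single i 1 := by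
    ext j
    simp [Pi.single_apply, eq_comm]
  simp [A, hsingle, mul_comm]

theorem sInf_image_orthogonal_eq_sSup_dual {K : Set (ι → ℝ)} (hK : IsCompact K)
    {F : (ι → ℝ) → ℝ} (hFc : ConvexOn ℝ K F) (hF : ContinuousOn F K)
    (W : Submodule ℝ (ι → ℝ)) (hne : ∃ π ∈ K, ∀ l ∈ W, π ⬝ᵥ l = 0) :
    sInf (F '' {π ∈ K | ∀ l ∈ W, π ⬝ᵥ l = 0})
      = sSup ((fun l => sInf ((fun π => F π + π ⬝ᵥ l) '' K)) '' W) := by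
  set C := {π ∈ K | ∀ l ∈ W, π ⬝ᵥ l = 0}
  have hC : IsCompact C := hK.inter_right (t := {π | ∀ l ∈ W, π ⬝ᵥ l = 0}) <| by
    simp only [Set.ofPred_forall]
    exact isClosed_iInter fun l => isClosed_iInter fun _ =>
      isClosed_eq (continuous_id.dotProduct continuous_const) continuous_const
  obtain ⟨πs, hπs, hmin⟩ := hC.exists_isMinOn hne (hF.mono (Set.sep_subset K _))
  have hprimal : sInf (F '' C) = F πs :=
    IsLeast.csInf_eq ⟨⟨πs, hπs, rfl⟩, by rintro _ ⟨π, hπ, rfl⟩; exact hmin hπ⟩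
  have hweak : ∀ l ∈ W, sInf ((fun π => F π + π ⬝ᵥ l) '' K) ≤ F πs := fun l hl => by
    have hbdd := (hK.image_of_continuousOn (f := fun π => F π + π ⬝ᵥ l)
      (hF.add (continuous_id.dotProduct continuous_const).continuousOn)).bddBelow
    simpa [hπs.2 l hl] using csInf_le hbdd ⟨πs, hπs.1, rfl⟩
  have hstrong : ∀ δ > 0, ∃ l ∈ W, F πs - δ ≤ sInf ((fun π => F π + π ⬝ᵥ l) '' K) :=
    fun δ hδ => by
      obtain ⟨l, hl, hlt⟩ := exists_mem_forall_lt_add_dotProduct hK hFc hF W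
        (fun π hπ h => hmin ⟨hπ, h⟩) hne hδ
      refine ⟨l, hl, le_csInf ⟨_, πs, hπs.1, rfl⟩ ?_⟩
      rintro _ ⟨π, hπ, rfl⟩
      exact (hlt π hπ).le
  have hub : F πs ∈ upperBounds ((fun l => sInf ((fun π => F π + π ⬝ᵥ l) '' K)) '' W) := by
    rintro _ ⟨l, hl, rfl⟩
    exact hweak l hl
  rw [hprimal]
  refine le_antisymm (le_of_forall_pos_le_add fun δ hδ => ?_)
    (csSup_le ⟨_, 0, W.zero_mem, rfl⟩ hub)
  obtain ⟨l, hl, hle⟩ := hstrong δ hδ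
  have := le_csSup ⟨F πs, hub⟩ ⟨l, hl, rfl⟩
  linarith

end LagrangeDuality

section Couplings

variable {A B : Type*} [Fintype A] [Fintype B] {μ : A → ℝ} {ν : B → ℝ} {π : A × B → ℝ}

theorem IsCouplingOf.sum_mul_fst (hπ : IsCouplingOf μ ν π) (F : A → ℝ) :
    ∑ p, π p * F p.1 = ∑ a, μ a * F a := by
  rw [Fintype.sum_prod_type]
  exact sum_congr rfl fun a _ => by simp only [← sum_mul, hπ.2.1 a]

theorem IsCouplingOf.eq_zero_of_fst (hπ : IsCouplingOf μ ν π) {p : A × B} (hp : μ p.1 = 0) :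
    π p = 0 := by
  rw [← hπ.2.1 p.1, sum_eq_zero_iff_of_nonneg fun b _ => hπ.1 _] at hp
  exact hp p.2 (mem_univ _)

theorem isCouplingOf_prod (hμ : ∀ a, 0 ≤ μ a) (hν : ∀ b, 0 ≤ ν b) (hμ₁ : ∑ a, μ a = 1)
    (hν₁ : ∑ b, ν b = 1) : IsCouplingOf μ ν fun p => μ p.1 * ν p.2 :=
  ⟨fun p => mul_nonneg (hμ p.1) (hν p.2), fun a => by simp [← mul_sum, hν₁],
    fun b => by simp [← sum_mul, hμ₁]⟩

theorem isCompact_setOf_isCouplingOf : IsCompact {π | IsCouplingOf μ ν π} := by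
  have hclosed : IsClosed {π | IsCouplingOf μ ν π} := by
    simp only [IsCouplingOf, Set.ofPred_and, Set.ofPred_forall]
    refine (isClosed_iInter fun p => isClosed_le continuous_const (continuous_apply p)).inter
      ((isClosed_iInter fun a => isClosed_eq ?_ continuous_const).inter
        (isClosed_iInter fun b => isClosed_eq ?_ continuous_const)) <;>
    exact continuous_finsetSum _ fun _ _ => continuous_apply _
  refine (isCompact_univ_pi fun p => isCompact_Icc (a := 0) (b := μ p.1)).of_isClosed_subset
    hclosed fun π hπ p _ => ⟨hπ.1 p, ?_⟩
  rw [← hπ.2.1 p.1]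
  exact single_le_sum (f := fun b => π (p.1, b)) (fun b _ => hπ.1 _) (mem_univ p.2)

theorem convex_setOf_isCouplingOf : Convex ℝ {π | IsCouplingOf μ ν π} := by
  rintro π₁ ⟨h₁, hμ₁, hν₁⟩ π₂ ⟨h₂, hμ₂, hν₂⟩ s t hs ht hst
  refine ⟨fun p => add_nonneg (mul_nonneg hs (h₁ p)) (mul_nonneg ht (h₂ p)), fun a => ?_,
    fun b => ?_⟩ <;>
  simp only [Pi.add_apply, Pi.smul_apply, smul_eq_mul, sum_add_distrib, ← mul_sum, hμ₁, hμ₂,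
    hν₁, hν₂, ← add_mul, hst, one_mul]

end Couplings

section Entropy

variable {α : Type*} [Fintype α]

theorem shannonEntropy_eq_sum_negMulLog (p : α → ℝ) :
    shannonEntropy p = ∑ a, Real.negMulLog (p a) := by
  simp [shannonEntropy, Real.negMulLog]

theorem continuous_shannonEntropy : Continuous (shannonEntropy : (α → ℝ) → ℝ) := by
  simp only [funext shannonEntropy_eq_sum_negMulLog]
  fun_prop

theorem concaveOn_shannonEntropy :
    ConcaveOn ℝ {p : α → ℝ | ∀ a, 0 ≤ p a} shannonEntropy := by
  refine ⟨fun p hp q hq s t hs ht hst a => ?_, fun p hp q hq s t hs ht hst => ?_⟩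
  · exact add_nonneg (mul_nonneg hs (hp a)) (mul_nonneg ht (hq a))
  simp only [shannonEntropy_eq_sum_negMulLog, smul_eq_mul, mul_sum, ← sum_add_distrib]
  exact sum_le_sum fun a _ => Real.concaveOn_negMulLog.2 (hp a) (hq a) hs ht hst

end Entropy

section Filtration

variable {Z : Type*} {T : ℕ}

-- Reducible, so that it is the relation appearing in `DepOn` and `CausalCoupling`.
abbrev AgreeUpTo (t : ℕ) (z z' : Fin T → Z) : Prop :=
  ∀ s : Fin T, (s : ℕ) ≤ t → z s = z' s

theorem AgreeUpTo.symm {t : ℕ} {z z' : Fin T → Z} (h : AgreeUpTo t z z') :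
    AgreeUpTo t z' z := fun s hs => (h s hs).symm

theorem AgreeUpTo.trans {t : ℕ} {z z' z'' : Fin T → Z} (h : AgreeUpTo t z z')
    (h' : AgreeUpTo t z' z'') : AgreeUpTo t z z'' := fun s hs => (h s hs).trans (h' s hs)

def prefixSetoid (T t : ℕ) (Z : Type*) : Setoid (Fin T → Z) where
  r := AgreeUpTo t
  iseqv := ⟨fun _ _ _ => rfl, AgreeUpTo.symm, AgreeUpTo.trans⟩

theorem DepOn.mono {t t' : ℕ} {f : (Fin T → Z) → ℝ} (hf : DepOn t f) (htt' : t ≤ t') :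
    DepOn t' f :=
  fun z z' h => hf z z' fun s hs => h s (hs.trans htt')

variable [DecidableEq Z]

theorem depOn_indicator (t : ℕ) (a : Fin T → Z) :
    DepOn t fun z => if AgreeUpTo t z a then (1 : ℝ) else 0 :=
  fun z z' (h : AgreeUpTo t z z') => by
  simp only [show AgreeUpTo t z a ↔ AgreeUpTo t z' a from ⟨h.symm.trans, h.trans⟩]

theorem sum_eq_zero_of_sum_agreeUpTo_eq_zero {α M : Type*} [Fintype α] [AddCommMonoid M]
    (t : ℕ) (k : α → Fin T → Z) (G : α → M)
    (h : ∀ a, (∑ p, if AgreeUpTo t (k p) a then G p else 0) = 0) : ∑ p, G p = 0 := by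
  classical
  refine sum_cancels_of_partition_cancels ((prefixSetoid T t Z).comap k) fun q _ => ?_
  rw [sum_filter]
  convert h (k q)
  exact Iff.rfl

variable [Fintype Z]

/-- The conditional expectation `E^μ[ψ | z_{≤t}]`, set to `0` on cylinders of `μ`-mass zero. -/
noncomputable def condExpUpTo (μ : (Fin T → Z) → ℝ) (t : ℕ) (ψ : (Fin T → Z) → ℝ)
    (z : Fin T → Z) : ℝ :=
  (∑ z', if AgreeUpTo t z' z then μ z' * ψ z' else 0) /
    ∑ z', if AgreeUpTo t z' z then μ z' else 0

variable {μ : (Fin T → Z) → ℝ}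

theorem depOn_condExpUpTo (t : ℕ) (ψ : (Fin T → Z) → ℝ) : DepOn t (condExpUpTo μ t ψ) :=
  fun z z' (h : AgreeUpTo t z z') => by
    have hcyl : ∀ z'', AgreeUpTo t z'' z ↔ AgreeUpTo t z'' z' :=
      fun z'' => ⟨fun h' => h'.trans h, fun h' => h'.trans h.symm⟩
    simp only [condExpUpTo, hcyl]

theorem condExpUpTo_mul_left {t : ℕ} {φ : (Fin T → Z) → ℝ} (hφ : DepOn t φ)
    (ψ : (Fin T → Z) → ℝ) (z : Fin T → Z) :
    condExpUpTo μ t (fun z => φ z * ψ z) z = φ z * condExpUpTo μ t ψ z := by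
  rw [condExpUpTo, condExpUpTo, ← mul_div_assoc, mul_sum]
  congr 1
  refine sum_congr rfl fun z' _ => ?_
  split_ifs with h
  · rw [hφ z' z h]
    ring
  · rw [mul_zero]

theorem condExpUpTo_mul_mass (hμ : ∀ z, 0 ≤ μ z) (t : ℕ) (ψ : (Fin T → Z) → ℝ)
    (z : Fin T → Z) :
    condExpUpTo μ t ψ z * (∑ z', if AgreeUpTo t z' z then μ z' else 0)
      = ∑ z', if AgreeUpTo t z' z then μ z' * ψ z' else 0 := by
  by_cases hmass : (∑ z', if AgreeUpTo t z' z then μ z' else 0) = 0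
  · rw [hmass, mul_zero, sum_ite_mul_eq_zero_of_sum_ite_eq_zero hμ hmass]
  · exact div_mul_cancel₀ _ hmass

theorem sum_mul_condExpUpTo (hμ : ∀ z, 0 ≤ μ z) (t : ℕ) (ψ : (Fin T → Z) → ℝ) :
    ∑ z, μ z * condExpUpTo μ t ψ z = ∑ z, μ z * ψ z := by
  rw [← sub_eq_zero, ← sum_sub_distrib]
  refine sum_eq_zero_of_sum_agreeUpTo_eq_zero t id _ fun a => ?_
  calc (∑ z, if AgreeUpTo t z a then μ z * condExpUpTo μ t ψ z - μ z * ψ z else 0)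
      = condExpUpTo μ t ψ a * (∑ z, if AgreeUpTo t z a then μ z else 0)
          - ∑ z, if AgreeUpTo t z a then μ z * ψ z else 0 := by
        rw [mul_sum, ← sum_sub_distrib]
        refine sum_congr rfl fun z _ => ?_
        split_ifs with h
        · rw [depOn_condExpUpTo t ψ z a h]
          ring
        · ring
    _ = 0 := by rw [condExpUpTo_mul_mass hμ, sub_self]

theorem isMuMartingale_condExpUpTo (hμ : ∀ z, 0 ≤ μ z) (ψ : (Fin T → Z) → ℝ) :
    IsMuMartingale μ fun t => condExpUpTo μ t ψ := by
  refine ⟨fun t => depOn_condExpUpTo t ψ, fun t _ φ hφ => ?_⟩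
  have htower : ∀ s, DepOn s φ →
      ∑ z, μ z * φ z * condExpUpTo μ s ψ z = ∑ z, μ z * (φ z * ψ z) := fun s hs => by
    simp only [mul_assoc, ← condExpUpTo_mul_left hs]
    exact sum_mul_condExpUpTo hμ s _
  simp only [mul_sub, sum_sub_distrib, htower _ hφ, htower _ (hφ.mono t.le_succ), sub_self]

theorem condExpUpTo_of_le {t : ℕ} (ht : T ≤ t + 1) (ψ : (Fin T → Z) → ℝ) {z : Fin T → Z}
    (hz : μ z ≠ 0) : condExpUpTo μ t ψ z = ψ z := by
  have hcyl : ∀ z', AgreeUpTo t z' z ↔ z' = z :=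
    fun z' => ⟨fun h => funext fun s => h s (by omega), fun h s _ => h ▸ rfl⟩
  simp only [condExpUpTo, hcyl, sum_ite_eq', mem_univ, if_true]
  field_simp

end Filtration

section Causality

variable {X Y : Type*} {T : ℕ} [Fintype X] [Fintype Y] {μ : (Fin T → X) → ℝ}

theorem inLmu_sum_range {h : ℕ → (Fin T → Y) → ℝ} (hh : ∀ t, DepOn t (h t))
    {M : ℕ → (Fin T → X) → ℝ} (hM : IsMuMartingale μ M) :
    InLmu μ fun p => ∑ t ∈ range (T - 1), h t p.2 * (M (t + 1) p.1 - M t p.1) :=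
  ⟨1, fun _ => h, fun _ => M, fun _ => hh, fun _ => hM, by simp⟩

variable (Y) in
def causalityTests (μ : (Fin T → X) → ℝ) : Submodule ℝ ((Fin T → X) × (Fin T → Y) → ℝ) where
  carrier := {l | InLmu μ l}
  zero_mem' := ⟨0, Fin.elim0, Fin.elim0, Fin.rec0, Fin.rec0, by ext; simp⟩
  add_mem' := by
    rintro _ _ ⟨J, h, M, hh, hM, rfl⟩ ⟨J', h', M', hh', hM', rfl⟩
    refine ⟨J + J', Fin.append h h', Fin.append M M', fun j => ?_, fun j => ?_, ?_⟩
    · refine Fin.addCases (fun i => ?_) (fun i => ?_) j <;> simp [hh, hh']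
    · refine Fin.addCases (fun i => ?_) (fun i => ?_) j <;> simp [hM, hM']
    ext p
    simp [Fin.sum_univ_add]
  smul_mem' := by
    rintro r _ ⟨J, h, M, hh, hM, rfl⟩
    refine ⟨J, fun j t y => r * h j t y, M, fun j t z z' hz => congrArg (r * ·) (hh j t z z' hz),
      hM, ?_⟩
    ext p
    simp [mul_sum, mul_assoc]

theorem dotProduct_eq_zero_of_inLmu {π : (Fin T → X) × (Fin T → Y) → ℝ}
    (H : ∀ t, t + 1 < T → ∀ h : (Fin T → Y) → ℝ, DepOn t h → ∀ M, IsMuMartingale μ M →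
      ∑ p, π p * (h p.2 * (M (t + 1) p.1 - M t p.1)) = 0)
    {l : (Fin T → X) × (Fin T → Y) → ℝ} (hl : InLmu μ l) : π ⬝ᵥ l = 0 := by
  obtain ⟨J, h, M, hh, hM, rfl⟩ := hl
  simp only [dotProduct, mul_sum]
  rw [sum_comm]
  refine sum_eq_zero fun j _ => ?_
  rw [sum_comm]
  refine sum_eq_zero fun t ht => H t ?_ _ (hh j t) _ (hM j)
  have := mem_range.1 ht
  omega

theorem dotProduct_prod_eq_zero_of_inLmu (ν : (Fin T → Y) → ℝ)
    {l : (Fin T → X) × (Fin T → Y) → ℝ} (hl : InLmu μ l) :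
    (fun p => μ p.1 * ν p.2) ⬝ᵥ l = 0 := by
  refine dotProduct_eq_zero_of_inLmu (fun t ht h _ M hM => ?_) hl
  calc ∑ p : (Fin T → X) × (Fin T → Y), μ p.1 * ν p.2 * (h p.2 * (M (t + 1) p.1 - M t p.1))
      = (∑ x, μ x * 1 * (M (t + 1) x - M t x)) * ∑ y, ν y * h y := by
        rw [Fintype.sum_prod_type, sum_mul]
        exact sum_congr rfl fun x _ => by rw [mul_sum]; exact sum_congr rfl fun y _ => by ring
    _ = 0 := by rw [hM.2 t ht _ fun _ _ _ => rfl, zero_mul]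

variable [DecidableEq X] {ν : (Fin T → Y) → ℝ} {π : (Fin T → X) × (Fin T → Y) → ℝ}

theorem CausalCoupling.sum_mul_increment_eq_zero (hπ : IsCouplingOf μ ν π)
    (hc : CausalCoupling π) {t : ℕ} (ht : t + 1 < T) {h : (Fin T → Y) → ℝ} (hh : DepOn t h)
    {M : ℕ → (Fin T → X) → ℝ} (hM : IsMuMartingale μ M) :
    ∑ p, π p * (h p.2 * (M (t + 1) p.1 - M t p.1)) = 0 := by
  refine sum_eq_zero_of_sum_agreeUpTo_eq_zero t Prod.fst _ fun a => ?_
  have hincr : (∑ p, if AgreeUpTo t p.1 a then π p * (M (t + 1) p.1 - M t p.1) else 0) = 0 := by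
    have hmart := hM.2 t ht _ (depOn_indicator t a)
    simp only [mul_assoc] at hmart
    rw [← hπ.sum_mul_fst] at hmart
    simpa only [ite_mul, one_mul, zero_mul, mul_ite, mul_zero] using hmart
  have hcaus := hc t ht h hh (fun x => M (t + 1) x - M t x) a
  simp only [AgreeUpTo] at hincr ⊢
  rw [hincr, mul_zero] at hcaus
  rcases mul_eq_zero.1 hcaus with h0 | h0
  · simpa only [mul_assoc] using h0
  · exact sum_ite_mul_eq_zero_of_sum_ite_eq_zero hπ.1 h0 _

theorem sum_mul_eq_sum_mul_condExpUpTo (hμ : ∀ x, 0 ≤ μ x) (hπ : IsCouplingOf μ ν π)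
    (horth : ∀ l, InLmu μ l → π ⬝ᵥ l = 0) {t : ℕ} (ht : t < T) {f : (Fin T → Y) → ℝ}
    (hf : DepOn t f) (ψ : (Fin T → X) → ℝ) :
    ∑ p, π p * (f p.2 * ψ p.1) = ∑ p, π p * (f p.2 * condExpUpTo μ t ψ p.1) := by
  have hh : ∀ s, DepOn s fun y => if t ≤ s then f y else 0 := fun s => by
    by_cases hts : t ≤ s
    · simpa only [hts, if_true] using hf.mono hts
    · simp only [hts, if_false]
      exact fun _ _ _ => rfl
  have htest := horth _ (inLmu_sum_range hh (isMuMartingale_condExpUpTo hμ ψ))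
  have htel : ∀ p : (Fin T → X) × (Fin T → Y),
      ∑ s ∈ range (T - 1),
          (if t ≤ s then f p.2 else 0) * (condExpUpTo μ (s + 1) ψ p.1 - condExpUpTo μ s ψ p.1)
        = f p.2 * (condExpUpTo μ (T - 1) ψ p.1 - condExpUpTo μ t ψ p.1) := fun p => by
    simp only [ite_mul, zero_mul]
    rw [← sum_filter, range_eq_Ico, Ico_filter_le, max_eq_right t.zero_le, ← mul_sum,
      sum_Ico_sub (fun s => condExpUpTo μ s ψ p.1) (by omega)]
  have hterm : ∀ p : (Fin T → X) × (Fin T → Y),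
      π p * (f p.2 * condExpUpTo μ (T - 1) ψ p.1) = π p * (f p.2 * ψ p.1) := fun p => by
    by_cases hp : μ p.1 = 0
    · rw [hπ.eq_zero_of_fst hp, zero_mul, zero_mul]
    · rw [condExpUpTo_of_le (by omega) ψ hp]
  simp only [dotProduct, htel] at htest
  simp only [mul_sub, sum_sub_distrib, hterm] at htest
  exact sub_eq_zero.1 htest

theorem causalCoupling_of_orthogonal (hμ : ∀ x, 0 ≤ μ x) (hπ : IsCouplingOf μ ν π)
    (horth : ∀ l, InLmu μ l → π ⬝ᵥ l = 0) : CausalCoupling π := by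
  intro t ht f hf g a
  set κ := condExpUpTo μ t g a
  -- On the cylinder of `a`, `E^μ[1_a g | x_{≤t}] = κ 1_a`.
  have hcyl : ∀ f' : (Fin T → Y) → ℝ, DepOn t f' →
      (∑ p, if AgreeUpTo t p.1 a then π p * f' p.2 * g p.1 else 0)
        = κ * ∑ p, if AgreeUpTo t p.1 a then π p * f' p.2 else 0 := fun f' hf' => by
    calc (∑ p, if AgreeUpTo t p.1 a then π p * f' p.2 * g p.1 else 0)
        = ∑ p, π p * (f' p.2 * ((if AgreeUpTo t p.1 a then 1 else 0) * g p.1)) := by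
          refine sum_congr rfl fun p _ => ?_
          split_ifs <;> ring
      _ = ∑ p, π p *
            (f' p.2 * ((if AgreeUpTo t p.1 a then 1 else 0) * condExpUpTo μ t g p.1)) := by
          have key := sum_mul_eq_sum_mul_condExpUpTo hμ hπ horth (by omega) hf'
            fun x => (if AgreeUpTo t x a then 1 else 0) * g x
          simpa only [condExpUpTo_mul_left (depOn_indicator t a)] using key
      _ = κ * ∑ p, if AgreeUpTo t p.1 a then π p * f' p.2 else 0 := by
          rw [mul_sum]
          refine sum_congr rfl fun p _ => ?_
          split_ifs with hp
          · rw [depOn_condExpUpTo t g p.1 a hp]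
            ring
          · ring
  have hf := hcyl f hf
  have hone := hcyl (fun _ => 1) fun _ _ _ => rfl
  simp only [mul_one] at hone
  simp only [AgreeUpTo] at hf hone
  rw [hf, hone]
  ring

theorem causalCoupling_iff_orthogonal (hμ : ∀ x, 0 ≤ μ x) (hπ : IsCouplingOf μ ν π) :
    CausalCoupling π ↔ ∀ l, InLmu μ l → π ⬝ᵥ l = 0 :=
  ⟨fun hc _ hl => dotProduct_eq_zero_of_inLmu
      (fun _ ht _ hh _ hM => hc.sum_mul_increment_eq_zero hπ ht hh hM) hl,
    causalCoupling_of_orthogonal hμ hπ⟩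

end Causality

/-- Minimax reformulation of entropy-regularized causal optimal transport:
`inf_{π causal} {E^π[c] - εH(π)} = sup_{l ∈ L(μ)} inf_{π coupling} {E^π[c+l] - εH(π)}`. -/
theorem regularized_causal_OT_minimax
    {X Y : Type*} {T : ℕ} [Fintype X] [Fintype Y] [DecidableEq X]
    (μ : (Fin T → X) → ℝ) (ν : (Fin T → Y) → ℝ)
    (hμpos : ∀ x, 0 ≤ μ x) (hμsum : ∑ x, μ x = 1)
    (hνpos : ∀ y, 0 ≤ ν y) (hνsum : ∑ y, ν y = 1)
    (c : ((Fin T → X) × (Fin T → Y)) → ℝ) (ε : ℝ) (hε : 0 < ε) :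
    sInf ((fun π => expCost π c - ε * shannonEntropy π) ''
        {π | IsCouplingOf μ ν π ∧ CausalCoupling π})
      = sSup {r : ℝ | ∃ l, InLmu μ l ∧
          r = sInf ((fun π => expCost π (fun p => c p + l p) - ε * shannonEntropy π) ''
            {π | IsCouplingOf μ ν π})} := by
  set K := {π | IsCouplingOf μ ν π}
  have hcausal : {π | IsCouplingOf μ ν π ∧ CausalCoupling π}
      = {π ∈ K | ∀ l ∈ causalityTests Y μ, π ⬝ᵥ l = 0} :=
    Set.ext fun π => and_congr_right (causalCoupling_iff_orthogonal hμpos)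
  have hconv : ConvexOn ℝ K fun π => expCost π c - ε * shannonEntropy π :=
    (LinearMap.convexOn ((dotProductBilin ℝ ℝ).flip c) convex_setOf_isCouplingOf).sub
      ((concaveOn_shannonEntropy.subset (fun π hπ => hπ.1) convex_setOf_isCouplingOf).smul hε.le)
  have hcont : Continuous fun π => expCost π c - ε * shannonEntropy π :=
    (continuous_id.dotProduct continuous_const).sub
      (continuous_const.mul continuous_shannonEntropy)
  have hlagrangian : ∀ l π, expCost π (fun p => c p + l p) - ε * shannonEntropy π
      = expCost π c - ε * shannonEntropy π + π ⬝ᵥ l := fun l π => by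
    change π ⬝ᵥ (c + l) - _ = π ⬝ᵥ c - _ + _
    rw [dotProduct_add]
    ring
  rw [hcausal, sInf_image_orthogonal_eq_sSup_dual isCompact_setOf_isCouplingOf hconv
    hcont.continuousOn _ ⟨_, isCouplingOf_prod hμpos hνpos hμsum hνsum,
      fun l hl => dotProduct_prod_eq_zero_of_inLmu ν hl⟩]
  simp only [hlagrangian, Set.image, eq_comm (a := sInf _)]
  rfl
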